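/- For every exponent q with 1 < q ≤ 2, there exists a constant C > 0 such that for all a ∈ [-1,1] and all b₁, b₂ ∈ ℝ, |(a+b₁)*|a+b₁|^(q-1) - (a+b₂)*|a+b₂|^(q-1) - q*|a|^(q-1)*(b₁ - b₂)| ≤ C*|b₁ - b₂|*(|b₁|^(q-1) + |b₂|^(q-1)). -/

import Mathlib

/-!
Write `φ x = x * |x| ^ (q - 1)`, so that `φ' x = q * |x| ^ (q - 1)`. Since `0 ≤ q - 1 ≤ 1`, the
function `x ↦ |x| ^ (q - 1)` is `(q - 1)`-Hölder with constant `1`, hence on the segment between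
`b₂` and `b₁` the derivative `φ'(a + b) - φ'(a)` of `b ↦ φ(a + b) - φ'(a) b` is bounded by
`q * |b| ^ (q - 1) ≤ q * (|b₁| ^ (q - 1) + |b₂| ^ (q - 1))`. The mean value theorem gives the
claim with `C = q`.
-/

open Real Set

lemma hasDerivAt_mul_of_continuousAt_zero {𝕜 : Type*} [NontriviallyNormedField 𝕜] {g : 𝕜 → 𝕜} (hg : ContinuousAt g 0) :
    HasDerivAt (fun x => x * g x) (g 0) 0 := by
  rw [hasDerivAt_iff_tendsto_slope]
  refine (hg.tendsto.mono_left nhdsWithin_le_nhds).congr' ?_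
  filter_upwards [self_mem_nhdsWithin] with x (hx : x ≠ 0)
  simp [slope, hx]

section OddPower

variable {q : ℝ}

lemma hasDerivAt_mul_abs_rpow_of_pos {x : ℝ} (hx : 0 < x) :
    HasDerivAt (fun y => y * |y| ^ (q - 1)) (q * |x| ^ (q - 1)) x := by
  rw [abs_of_pos hx]
  refine (hasDerivAt_rpow_const (Or.inl hx.ne')).congr_of_eventuallyEq ?_
  filter_upwards [eventually_gt_nhds hx] with y hy
  rw [abs_of_pos hy, rpow_sub_one hy.ne', mul_div_cancel₀ _ hy.ne']

lemma hasDerivAt_mul_abs_rpow_of_ne_zero {x : ℝ} (hx : x ≠ 0) :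
    HasDerivAt (fun y => y * |y| ^ (q - 1)) (q * |x| ^ (q - 1)) x := by
  rcases hx.lt_or_gt with hneg | hpos
  · -- the function is odd, so the negative half-line reduces to the positive one
    have h := ((hasDerivAt_mul_abs_rpow_of_pos (q := q) (neg_pos.2 hneg)).comp x
      (hasDerivAt_neg x)).neg
    rw [abs_neg, mul_neg_one, neg_neg] at h
    refine h.congr_of_eventuallyEq (.of_eq (funext fun y => ?_))
    simp
  · exact hasDerivAt_mul_abs_rpow_of_pos hpos

lemma hasDerivAt_mul_abs_rpow (hq : 1 < q) (x : ℝ) :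
    HasDerivAt (fun y => y * |y| ^ (q - 1)) (q * |x| ^ (q - 1)) x := by
  rcases eq_or_ne x 0 with rfl | hx
  · have hg : ContinuousAt (fun y : ℝ => |y| ^ (q - 1)) 0 :=
      continuous_abs.continuousAt.rpow_const (Or.inr (by linarith))
    simpa [zero_rpow (by linarith : q - 1 ≠ 0)] using hasDerivAt_mul_of_continuousAt_zero hg
  · exact hasDerivAt_mul_abs_rpow_of_ne_zero hx

end OddPower

section Holder

variable {p : ℝ}

lemma rpow_le_rpow_add_abs_sub_rpow {a b : ℝ} (ha : 0 ≤ a) (hb : 0 ≤ b) (hp0 : 0 ≤ p)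
    (hp1 : p ≤ 1) : a ^ p ≤ b ^ p + |a - b| ^ p :=
  calc a ^ p ≤ (b + |a - b|) ^ p := rpow_le_rpow ha (by linarith [le_abs_self (a - b)]) hp0
    _ ≤ b ^ p + |a - b| ^ p := rpow_add_le_add_rpow hb (abs_nonneg _) hp0 hp1

lemma abs_rpow_sub_rpow_le {a b : ℝ} (ha : 0 ≤ a) (hb : 0 ≤ b) (hp0 : 0 ≤ p) (hp1 : p ≤ 1) :
    |a ^ p - b ^ p| ≤ |a - b| ^ p := by
  have hba := rpow_le_rpow_add_abs_sub_rpow hb ha hp0 hp1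
  rw [abs_sub_comm] at hba
  rw [abs_sub_le_iff]
  constructor <;> linarith [rpow_le_rpow_add_abs_sub_rpow ha hb hp0 hp1]

lemma abs_abs_rpow_sub_abs_rpow_le (hp0 : 0 ≤ p) (hp1 : p ≤ 1) (x y : ℝ) :
    |(|x| ^ p - |y| ^ p)| ≤ |x - y| ^ p :=
  (abs_rpow_sub_rpow_le (abs_nonneg x) (abs_nonneg y) hp0 hp1).trans
    (rpow_le_rpow (abs_nonneg _) (abs_abs_sub_abs_le_abs_sub x y) hp0)

lemma abs_rpow_le_add_of_mem_segment (hp : 0 ≤ p) {b b₁ b₂ : ℝ} (hb : b ∈ segment ℝ b₂ b₁) :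
    |b| ^ p ≤ |b₁| ^ p + |b₂| ^ p := by
  have hmax : |b| ≤ max |b₂| |b₁| := by
    simpa only [norm_eq_abs] using
      (convexOn_norm convex_univ).le_max_of_mem_segment (mem_univ _) (mem_univ _) hb
  rcases le_max_iff.1 hmax with h | h
  · linarith [rpow_le_rpow (abs_nonneg b) h hp, rpow_nonneg (abs_nonneg b₁) p]
  · linarith [rpow_le_rpow (abs_nonneg b) h hp, rpow_nonneg (abs_nonneg b₂) p]

end Holder

theorem stmt_2 (q : ℝ) (hq1 : 1 < q) (hq2 : q ≤ 2) :
    ∃ C : ℝ, 0 < C ∧ ∀ a ∈ Set.Icc (-1 : ℝ) 1, ∀ b₁ b₂ : ℝ,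
      |(a + b₁) * |a + b₁| ^ (q - 1) - (a + b₂) * |a + b₂| ^ (q - 1)
          - q * |a| ^ (q - 1) * (b₁ - b₂)|
        ≤ C * |b₁ - b₂| * (|b₁| ^ (q - 1) + |b₂| ^ (q - 1)) := by
  refine ⟨q, by linarith, fun a _ b₁ b₂ => ?_⟩
  have hp0 : 0 ≤ q - 1 := by linarith
  have hp1 : q - 1 ≤ 1 := by linarith
  have hderiv : ∀ b, HasDerivAt (fun b => (a + b) * |a + b| ^ (q - 1) - q * |a| ^ (q - 1) * b)
      (q * |a + b| ^ (q - 1) - q * |a| ^ (q - 1)) b := fun b => by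
    have h := ((hasDerivAt_mul_abs_rpow hq1 (a + b)).comp_const_add a b).sub
      ((hasDerivAt_id' b).const_mul (q * |a| ^ (q - 1)))
    rwa [mul_one] at h
  have hbound : ∀ b ∈ segment ℝ b₂ b₁, ‖q * |a + b| ^ (q - 1) - q * |a| ^ (q - 1)‖
      ≤ q * (|b₁| ^ (q - 1) + |b₂| ^ (q - 1)) := fun b hb => by
    rw [← mul_sub, norm_mul, norm_eq_abs, norm_eq_abs, abs_of_pos (by linarith : 0 < q)]
    refine mul_le_mul_of_nonneg_left ?_ (by linarith)
    calc |(|a + b| ^ (q - 1) - |a| ^ (q - 1))| ≤ |a + b - a| ^ (q - 1) :=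
          abs_abs_rpow_sub_abs_rpow_le hp0 hp1 _ _
      _ = |b| ^ (q - 1) := by rw [add_sub_cancel_left]
      _ ≤ |b₁| ^ (q - 1) + |b₂| ^ (q - 1) := abs_rpow_le_add_of_mem_segment hp0 hb
  have hmvt := (convex_segment b₂ b₁).norm_image_sub_le_of_norm_hasDerivWithin_le
    (fun b _ => (hderiv b).hasDerivWithinAt) hbound (left_mem_segment ℝ _ _)
    (right_mem_segment ℝ _ _)
  rw [norm_eq_abs, norm_eq_abs] at hmvt
  convert hmvt using 1
  · ring_nf
  · ring
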